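/- Let N ≥ 5, h = 1/(N+1), and δ ≤ h. Let S_δ be the N×N symmetric matrix with entries (S_δ)_{jk} = (1/h)·(2 − r(2−α)/(3−α)) if j = k, (1/h)·(−1 + 2r(2−α)/(3(3−α))) if |j−k| = 1, (1/h)·(−r(2−α)/(6(3−α))) if |j−k| = 2, and 0 otherwise, where r = δ/h ∈ (0,1) and α ∈ [−1, 2). Then S_δ is diagonally dominant and all its off-diagonal entries are non-positive; moreover all off-diagonal nonzero entries are strictly negative. -/

import Mathlib

/-!
`S_δ` is the pentadiagonal Toeplitz matrix with diagonal `d`, first off-diagonals `a` and second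
off-diagonals `b`. Every row meets each off-diagonal at most twice, so its off-diagonal absolute
sum is at most `2|a| + 2|b|`. Writing `c = r(2-α)/(3-α) ∈ (0,1)`, the coefficients are
`d = (2 - c)/h`, `a = (-1 + 2c/3)/h < 0` and `b = -c/(6h) < 0`, and `-2a - 2b = d`, so the
interior rows are balanced exactly.
-/

open Finset

section Pentadiagonal

def pentadiagToeplitz {R : Type*} [Zero R] (N : ℕ) (d a b : R) : Matrix (Fin N) (Fin N) R :=
  fun j k =>
    if j = k then d
    else if |(j : ℤ) - (k : ℤ)| = 1 then a
    else if |(j : ℤ) - (k : ℤ)| = 2 then b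
    else 0

theorem card_filter_abs_sub_eq_le_two {N : ℕ} (k : Fin N) (m : ℤ) :
    #{j : Fin N | |(k : ℤ) - j| = m} ≤ 2 := by
  calc #{j : Fin N | |(k : ℤ) - j| = m}
      ≤ #({(k : ℤ) + m, (k : ℤ) - m} : Finset ℤ) := by
        refine card_le_card_of_injOn (fun j : Fin N => (j : ℤ)) ?_ ?_
        · intro j hj
          simp only [coe_filter, mem_univ, true_and, Set.mem_ofPred_eq] at hj
          simp only [coe_insert, coe_singleton, Set.mem_insert_iff, Set.mem_singleton_iff]
          rcases abs_cases ((k : ℤ) - j) with ⟨_, _⟩ | ⟨_, _⟩ <;> omega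
        · intro i _ j _ hij
          exact Fin.ext (Int.ofNat_inj.mp hij)
    _ ≤ 2 := card_le_two

variable {R : Type*} [Ring R] [LinearOrder R] [IsOrderedRing R] {N : ℕ} {d a b : R}

theorem abs_pentadiagToeplitz_apply_le {j k : Fin N} (hjk : j ≠ k) :
    |pentadiagToeplitz N d a b j k| ≤
      (if |(j : ℤ) - k| = 1 then |a| else 0) + (if |(j : ℤ) - k| = 2 then |b| else 0) := by
  unfold pentadiagToeplitz
  split_ifs <;> first | omega | simp

theorem sum_abs_pentadiagToeplitz_offDiag_le (k : Fin N) :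
    ∑ j ∈ univ.erase k, |pentadiagToeplitz N d a b k j| ≤ 2 * |a| + 2 * |b| := by
  calc ∑ j ∈ univ.erase k, |pentadiagToeplitz N d a b k j|
      ≤ ∑ j ∈ univ.erase k,
          ((if |(k : ℤ) - j| = 1 then |a| else 0) + (if |(k : ℤ) - j| = 2 then |b| else 0)) :=
        sum_le_sum fun j hj => abs_pentadiagToeplitz_apply_le (ne_of_mem_erase hj).symm
    _ ≤ ∑ j : Fin N,
          ((if |(k : ℤ) - j| = 1 then |a| else 0) + (if |(k : ℤ) - j| = 2 then |b| else 0)) :=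
        sum_le_sum_of_subset_of_nonneg (erase_subset k univ) fun _ _ _ => by positivity
    _ = #{j : Fin N | |(k : ℤ) - j| = 1} * |a| + #{j : Fin N | |(k : ℤ) - j| = 2} * |b| := by
        rw [sum_add_distrib, ← sum_filter, ← sum_filter, sum_const, sum_const, nsmul_eq_mul,
          nsmul_eq_mul]
    _ ≤ 2 * |a| + 2 * |b| := by
        gcongr <;>
          exact (Nat.mono_cast (card_filter_abs_sub_eq_le_two k _)).trans_eq Nat.cast_ofNat

theorem pentadiagToeplitz_diagDominant (hdom : 2 * |a| + 2 * |b| ≤ |d|) (k : Fin N) :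
    ∑ j ∈ univ.erase k, |pentadiagToeplitz N d a b k j| ≤ |pentadiagToeplitz N d a b k k| := by
  simpa [pentadiagToeplitz] using (sum_abs_pentadiagToeplitz_offDiag_le k).trans hdom

omit [IsOrderedRing R] in
theorem pentadiagToeplitz_offDiag_nonpos (ha : a ≤ 0) (hb : b ≤ 0) {j k : Fin N} (hjk : j ≠ k) :
    pentadiagToeplitz N d a b j k ≤ 0 := by
  unfold pentadiagToeplitz
  split_ifs <;> first | contradiction | assumption | rfl

end Pentadiagonal

theorem stiffness_ratio_mem_Ioo {r α : ℝ} (hα : α < 2) (hr0 : 0 < r) (hr1 : r < 1) :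
    r * (2 - α) / (3 - α) ∈ Set.Ioo 0 1 := by
  have h2 : 0 < 2 - α := by linarith
  refine ⟨div_pos (mul_pos hr0 h2) (by linarith), (div_lt_one (by linarith)).mpr ?_⟩
  nlinarith

theorem stiffness_nearCoeff_neg {h c : ℝ} (hh : 0 < h) (hc1 : c < 1) :
    (1 / h) * (-1 + 2 * c / 3) < 0 :=
  mul_neg_of_pos_of_neg (by positivity) (by linarith)

theorem stiffness_farCoeff_neg {h c : ℝ} (hh : 0 < h) (hc0 : 0 < c) :
    (1 / h) * (-(c / 6)) < 0 :=
  mul_neg_of_pos_of_neg (by positivity) (by linarith)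

theorem stiffness_coeffs_diagDominant {h c : ℝ} (hh : 0 < h) (hc0 : 0 < c) (hc1 : c < 1) :
    2 * |(1 / h) * (-1 + 2 * c / 3)| + 2 * |(1 / h) * (-(c / 6))| ≤ |(1 / h) * (2 - c)| := by
  have hd : 0 < (1 / h) * (2 - c) := mul_pos (by positivity) (by linarith)
  rw [abs_of_neg (stiffness_nearCoeff_neg hh hc1), abs_of_neg (stiffness_farCoeff_neg hh hc0),
    abs_of_pos hd]
  linarith

theorem nonlocal_stiffness_diag_dominant_general (N : ℕ) (h δ α : ℝ)
    (hh : 0 < h) (hα2 : α < 2)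
    (hr0 : 0 < δ / h) (hr1 : δ / h < 1) :
    let r : ℝ := δ / h
    let S : Matrix (Fin N) (Fin N) ℝ := fun j k =>
      if j = k then (1 / h) * (2 - r * (2 - α) / (3 - α))
      else if |(j : ℤ) - (k : ℤ)| = 1 then (1 / h) * (-1 + 2 * r * (2 - α) / (3 * (3 - α)))
      else if |(j : ℤ) - (k : ℤ)| = 2 then (1 / h) * (-(r * (2 - α) / (6 * (3 - α))))
      else 0
    (∀ k : Fin N, ∑ j ∈ univ.erase k, |S k j| ≤ |S k k|) ∧
    (∀ j k : Fin N, j ≠ k → S j k ≤ 0) ∧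
    (∀ j k : Fin N, j ≠ k → S j k ≠ 0 → S j k < 0) := by
  intro r S
  obtain ⟨hc0, hc1⟩ := stiffness_ratio_mem_Ioo hα2 hr0 hr1
  set c := r * (2 - α) / (3 - α) with hc
  have hS : S = pentadiagToeplitz N ((1 / h) * (2 - c)) ((1 / h) * (-1 + 2 * c / 3))
      ((1 / h) * (-(c / 6))) := by
    have h3 : 3 - α ≠ 0 := by linarith
    have hnear : 2 * r * (2 - α) / (3 * (3 - α)) = 2 * c / 3 := by rw [hc]; field_simp
    have hfar : r * (2 - α) / (6 * (3 - α)) = c / 6 := by rw [hc]; field_simp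
    simp only [S, hnear, hfar, ← hc]
    rfl
  have hnonpos := fun (j k : Fin N) (hjk : j ≠ k) =>
    pentadiagToeplitz_offDiag_nonpos (d := (1 / h) * (2 - c))
      (stiffness_nearCoeff_neg hh hc1).le (stiffness_farCoeff_neg hh hc0).le hjk
  rw [hS]
  exact ⟨pentadiagToeplitz_diagDominant (stiffness_coeffs_diagDominant hh hc0 hc1), hnonpos,
    fun j k hjk hne => (hnonpos j k hjk).lt_of_ne hne⟩

/-- For `δ ≤ h` (with `r = δ/h ∈ (0,1)`) and `α ∈ [−1,2)`, the pentadiagonal nonlocal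
stiffness matrix is diagonally dominant, its off-diagonal entries are nonpositive, and its
nonzero off-diagonal entries are strictly negative. -/
theorem nonlocal_stiffness_diag_dominant (N : ℕ) (hN : 5 ≤ N) (h δ α : ℝ)
    (hh : 0 < h) (hδ0 : 0 < δ) (hδh : δ ≤ h) (hα1 : -1 ≤ α) (hα2 : α < 2)
    (hr0 : 0 < δ / h) (hr1 : δ / h < 1) :
    let r : ℝ := δ / h
    let S : Matrix (Fin N) (Fin N) ℝ := fun j k =>
      if j = k then (1 / h) * (2 - r * (2 - α) / (3 - α))
      else if |(j : ℤ) - (k : ℤ)| = 1 then (1 / h) * (-1 + 2 * r * (2 - α) / (3 * (3 - α)))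
      else if |(j : ℤ) - (k : ℤ)| = 2 then (1 / h) * (-(r * (2 - α) / (6 * (3 - α))))
      else 0
    (∀ k : Fin N, ∑ j ∈ univ.erase k, |S k j| ≤ |S k k|) ∧
    (∀ j k : Fin N, j ≠ k → S j k ≤ 0) ∧
    (∀ j k : Fin N, j ≠ k → S j k ≠ 0 → S j k < 0) :=
  nonlocal_stiffness_diag_dominant_general N h δ α hh hα2 hr0 hr1
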